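/- arXiv:2505.20785 — 2 statements merged into one kernel-verified Lean document; each statement's English description precedes it below -/
import Mathlib

section
/- Every skew-symmetric 𝔽_p-bilinear map b : V × V → W (for any prime p) extends to an augmented 𝔽_p-bilinear map (V̂, W, b̂, ε) where V is an 𝔽_p-linear subspace of V̂ of codimension at most 1 and b̂ restricted to V × V equals b. -/
theorem stmt_7 {p : ℕ} (hp : p.Prime) {V W : Type*}
    [AddCommGroup V] [Module (ZMod p) V] [AddCommGroup W] [Module (ZMod p) W]
    (b : V →ₗ[ZMod p] V →ₗ[ZMod p] W)
    (hskew : ∀ v v' : V, b v v' = - b v' v) :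
    ∃ (bhat : (V × ZMod p) →ₗ[ZMod p] (V × ZMod p) →ₗ[ZMod p] W)
      (ε : V × ZMod p),
      (∀ v v' : V, bhat (v, 0) (v', 0) = b v v') ∧
      (∀ w : V × ZMod p, bhat w (ε + w) = 0) ∧
      (2 : ℕ) • ε = 0 := by
  by_cases hp2 : p = 2
  · subst hp2
    have h2 : (2 : ZMod 2) = 0 := by decide
    have hq2 : ∀ v : V, b v v + b v v = 0 := fun v =>
      eq_neg_iff_add_eq_zero.mp (hskew v v)
    have hqadd : ∀ v v' : V, b (v + v') (v + v') = b v v + b v' v' := by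
      intro v v'
      simp only [map_add, LinearMap.add_apply]
      rw [hskew v v']
      abel
    have hone : ∀ c : ZMod 2, c = 0 ∨ c = 1 := by decide
    let q : V →ₗ[ZMod 2] W :=
      { toFun := fun v => b v v
        map_add' := hqadd
        map_smul' := by
          intro c v
          rcases hone c with rfl | rfl <;> simp }
    let bhat : (V × ZMod 2) →ₗ[ZMod 2] (V × ZMod 2) →ₗ[ZMod 2] W :=
      LinearMap.mk₂ (ZMod 2)
        (fun x y => b x.1 y.1 + x.2 • q y.1 + y.2 • q x.1)
        (by intro m m' n; simp [map_add, add_smul, smul_add]; abel)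
        (by intro c m n; simp [smul_add, smul_smul, mul_comm])
        (by intro m n n'; simp [map_add, add_smul, smul_add]; abel)
        (by intro c m n; simp [smul_add, smul_smul, mul_comm])
    refine ⟨bhat, ((0 : V), (1 : ZMod 2)), ?_, ?_, ?_⟩
    · intro v v'; simp [bhat]
    · intro w
      simp only [bhat, LinearMap.mk₂_apply, Prod.fst_add, Prod.snd_add, zero_add]
      have : b w.1 w.1 + w.2 • q w.1 + ((1 : ZMod 2) + w.2) • q w.1
          = b w.1 w.1 + (w.2 + ((1 : ZMod 2) + w.2)) • q w.1 := by
        rw [add_assoc, ← add_smul]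
      rw [this]
      have : w.2 + ((1 : ZMod 2) + w.2) = 1 := by
        have h : w.2 + ((1 : ZMod 2) + w.2) = 2 * w.2 + 1 := by ring
        rw [h, h2]; ring
      rw [this, one_smul]
      exact hq2 w.1
    · show (2 : ℕ) • (((0 : V), (1 : ZMod 2)) : V × ZMod 2) = 0
      ext
      · simp
      · show (2 : ℕ) • (1 : ZMod 2) = 0
        decide
  · -- p odd: b v v = 0
    haveI : Fact p.Prime := ⟨hp⟩
    have hpodd : (2 : ZMod p) ≠ 0 := by
      intro h
      have hdvd : p ∣ 2 := by
        have := (ZMod.natCast_eq_zero_iff 2 p).mp (by exact_mod_cast h)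
        exact this
      exact hp2 ((Nat.prime_dvd_prime_iff_eq hp Nat.prime_two).mp hdvd)
    have hbv : ∀ v : V, b v v = 0 := by
      intro v
      have h : b v v + b v v = 0 := eq_neg_iff_add_eq_zero.mp (hskew v v)
      have h' : (2 : ZMod p) • b v v = 0 := by rw [two_smul]; exact h
      rcases smul_eq_zero.mp h' with h'' | h''
      · exact absurd h'' hpodd
      · exact h''
    let f : (V × ZMod p) →ₗ[ZMod p] V := LinearMap.fst (ZMod p) V (ZMod p)
    refine ⟨(b.comp f).compl₂ f, 0, ?_, ?_, ?_⟩
    · intro v v'; simp [f]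
    · intro w; simp [f, hbv]
    · simp
end

section
/- Let b : V × V → W be a map of sets satisfying the common slot property: whenever b(v,u) = b(v',u') there exists u'' with b(v,u) = b(v,u'') and b(v',u') = b(v',u''). Let Γ = L_3 be the line graph on four vertices v_1, v_2, v_3, v_4 with edges e_1 = {v_1,v_2}, e_2 = {v_2,v_3}, e_3 = {v_3,v_4}, and let b_Γ : V_Γ × V_Γ → W_Γ be the associated 𝔽_2-bilinear map (V_Γ = 𝔽_2^4 with basis the vertices, W_Γ = 𝔽_2^3 with basis the edges, b_Γ(v_i, v_j) = e if {v_i, v_j} = e is an edge, and 0 otherwise). Then b_Γ does NOT have the common slot property; specifically, for v = v_2 + v_3, u = v_1 + v_2, v' = v_1 + v_2 + v_3 + v_4, u' = v_2, one has b_Γ(v, u) = b_Γ(v', u') = e_1 + e_2 ≠ 0, but there is no u'' ∈ V_Γ with b_Γ(v, u'') = e_1 + e_2 and b_Γ(v', u'') = e_1 + e_2. -/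
def CommonSlot {V W : Type*} (b : V → V → W) : Prop :=
  ∀ v u v' u', b v u = b v' u' → ∃ u'', b v u = b v u'' ∧ b v' u' = b v' u''

/-- The bilinear map associated with the line graph `L_3` on four vertices
`v_1, v_2, v_3, v_4` (indexed `0,1,2,3`), with edges
`e_1 = {v_1,v_2}`, `e_2 = {v_2,v_3}`, `e_3 = {v_3,v_4}`. -/
def bL3 (x y : Fin 4 → ZMod 2) : Fin 3 → ZMod 2 :=
  ![x 0 * y 1 + x 1 * y 0, x 1 * y 2 + x 2 * y 1, x 2 * y 3 + x 3 * y 2]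

theorem stmt_9 :
    bL3 ![0, 1, 1, 0] ![1, 1, 0, 0] = ![1, 1, 0] ∧
    bL3 ![1, 1, 1, 1] ![0, 1, 0, 0] = ![1, 1, 0] ∧
    (![1, 1, 0] : Fin 3 → ZMod 2) ≠ 0 ∧
    (¬ ∃ u'' : Fin 4 → ZMod 2,
      bL3 ![0, 1, 1, 0] u'' = ![1, 1, 0] ∧ bL3 ![1, 1, 1, 1] u'' = ![1, 1, 0]) ∧
    ¬ CommonSlot bL3 := by
  have hno : ¬ ∃ u'' : Fin 4 → ZMod 2,
      bL3 ![0, 1, 1, 0] u'' = ![1, 1, 0] ∧ bL3 ![1, 1, 1, 1] u'' = ![1, 1, 0] := by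
    decide
  refine ⟨by decide, by decide, by decide, hno, ?_⟩
  intro h
  obtain ⟨u'', h1, h2⟩ := h ![0,1,1,0] ![1,1,0,0] ![1,1,1,1] ![0,1,0,0] (by decide)
  exact hno ⟨u'', by rw [← h1]; decide, by rw [← h2]; decide⟩
end
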